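/- arXiv:1409.1396 — 5 statements merged into one kernel-verified Lean document; each statement's English description precedes it below -/
import Mathlib

section
/- For any positive integer k and any vector ζ⃗ ∈ ℝ^k, one has λ_{k,1}(ζ⃗) = ∞ if and only if λ̂_{k,2}(ζ⃗) = λ̂_{k,3}(ζ⃗) = ⋯ = λ̂_{k,k+1}(ζ⃗) = 0. -/
open scoped ENNReal

/-- The system `|x| ≤ X`, `max_{1≤i≤k} |ζ_i·x − y_i| ≤ X^(−η)` has at least `j`
linearly independent integer solutions `(x, y_1, …, y_k) ∈ ℤ^(k+1)`.
Here the solution vector `v i : Fin (k+1) → ℤ` has `x = v i 0` and `y_m = v i m.succ`. -/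
def HasSolutions (k : ℕ) (ζ : Fin k → ℝ) (η X : ℝ) (j : ℕ) : Prop :=
  ∃ v : Fin j → (Fin (k + 1) → ℤ), LinearIndependent ℤ v ∧
    ∀ i : Fin j, |(v i 0 : ℝ)| ≤ X ∧
      ∀ m : Fin k, |ζ m * (v i 0 : ℝ) - (v i m.succ : ℝ)| ≤ X ^ (-η)

/-- `λ_{k,j}(ζ⃗)`: the supremum in `[0,∞]` of all `η ∈ ℝ` such that the system has at
least `j` linearly independent solutions for arbitrarily large real `X`. -/
noncomputable def lambdaVec (k j : ℕ) (ζ : Fin k → ℝ) : ℝ≥0∞ :=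
  sSup {e : ℝ≥0∞ | ∃ η : ℝ, e = ENNReal.ofReal η ∧
    ∀ X₀ : ℝ, ∃ X : ℝ, X₀ ≤ X ∧ HasSolutions k ζ η X j}

/-- `λ̂_{k,j}(ζ⃗)`: the supremum in `[0,∞]` of all `η ∈ ℝ` such that the system has at
least `j` linearly independent solutions for every sufficiently large real `X`. -/
noncomputable def lambdaHatVec (k j : ℕ) (ζ : Fin k → ℝ) : ℝ≥0∞ :=
  sSup {e : ℝ≥0∞ | ∃ η : ℝ, e = ENNReal.ofReal η ∧
    ∃ X₀ : ℝ, ∀ X : ℝ, X₀ ≤ X → HasSolutions k ζ η X j}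

/-- `λ_{k,j}(ζ) = λ_{k,j}(ζ, ζ², …, ζ^k)`. -/
noncomputable def lambdaPow (k j : ℕ) (ζ : ℝ) : ℝ≥0∞ :=
  lambdaVec k j fun i => ζ ^ ((i : ℕ) + 1)

/-- `λ̂_{k,j}(ζ) = λ̂_{k,j}(ζ, ζ², …, ζ^k)`. -/
noncomputable def lambdaHatPow (k j : ℕ) (ζ : ℝ) : ℝ≥0∞ :=
  lambdaHatVec k j fun i => ζ ^ ((i : ℕ) + 1)

/-!
If `v` approximates `ζ` with a very large exponent at scale `X`, then every solution `u` at the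
scale `X ^ (2 / η)` has integer minors `v 0 * u (m + 1) - u 0 * v (m + 1)` of absolute value
less than `1`, so all such `u` are proportional to `v` and no two of them are independent.
Conversely, if at arbitrarily large `Y` the solutions with a small exponent `ε` are pairwise
dependent, Dirichlet's theorem at the scales `Y` and `Y ^ a` yields two of them; of two
proportional vectors the one with the smaller first coordinate has the smaller deviations, which
gives a solution with `|x| ≤ Y ^ a` and deviations `≤ 2 Y ^ (-1 / k)`, an exponent of about
`1 / (a k)` at the scale `Y ^ a`.
-/

open Filter

section

variable {k : ℕ}

def deviation (ζ : Fin k → ℝ) (v : Fin (k + 1) → ℤ) (m : Fin k) : ℝ :=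
  ζ m * v 0 - v m.succ

def IsSolution (ζ : Fin k → ℝ) (η X : ℝ) (v : Fin (k + 1) → ℤ) : Prop :=
  |(v 0 : ℝ)| ≤ X ∧ ∀ m, |deviation ζ v m| ≤ X ^ (-η)

variable {ζ : Fin k → ℝ}

theorem hasSolutions_iff {η X : ℝ} {j : ℕ} :
    HasSolutions k ζ η X j ↔
      ∃ v : Fin j → Fin (k + 1) → ℤ, LinearIndependent ℤ v ∧ ∀ i, IsSolution ζ η X (v i) :=
  Iff.rfl

theorem hasSolutions_one_iff {η X : ℝ} :
    HasSolutions k ζ η X 1 ↔ ∃ v, v ≠ 0 ∧ IsSolution ζ η X v := by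
  simp only [hasSolutions_iff, linearIndependent_unique_iff, Fin.forall_fin_one]
  exact ⟨fun ⟨v, hv, hs⟩ => ⟨v 0, hv, hs⟩, fun ⟨v, hv, hs⟩ => ⟨fun _ => v, hv, hs⟩⟩

theorem hasSolutions_two_of_linearIndependent {η X : ℝ}
    {v w : Fin (k + 1) → ℤ} (h : LinearIndependent ℤ ![v, w]) (hv : IsSolution ζ η X v)
    (hw : IsSolution ζ η X w) : HasSolutions k ζ η X 2 :=
  ⟨_, h, Fin.forall_fin_two.mpr ⟨hv, hw⟩⟩

theorem IsSolution.mono_exponent {η η' X : ℝ} {v : Fin (k + 1) → ℤ}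
    (h : IsSolution ζ η X v) (hη : η' ≤ η) (hX : 1 ≤ X) : IsSolution ζ η' X v :=
  ⟨h.1, fun m => (h.2 m).trans (Real.rpow_le_rpow_of_exponent_le hX (neg_le_neg hη))⟩

theorem HasSolutions.mono_exponent {η η' X : ℝ} {j : ℕ}
    (h : HasSolutions k ζ η X j) (hη : η' ≤ η) (hX : 1 ≤ X) : HasSolutions k ζ η' X j :=
  let ⟨v, hli, hv⟩ := h
  ⟨v, hli, fun i => IsSolution.mono_exponent (hv i) hη hX⟩

theorem HasSolutions.of_le {η X : ℝ} {j j' : ℕ}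
    (h : HasSolutions k ζ η X j) (hj : j' ≤ j) : HasSolutions k ζ η X j' :=
  let ⟨v, hli, hv⟩ := h
  ⟨v ∘ Fin.castLE hj, hli.comp _ (Fin.castLE_injective hj), fun _ => hv _⟩

theorem lambdaHatVec_anti {j j' : ℕ} (hj : j' ≤ j) :
    lambdaHatVec k j ζ ≤ lambdaHatVec k j' ζ :=
  sSup_le_sSup fun _ ⟨η, he, X₀, h⟩ => ⟨η, he, X₀, fun X hX => (h X hX).of_le hj⟩

theorem lambdaVec_eq_top_iff {j : ℕ} :
    lambdaVec k j ζ = ⊤ ↔ ∀ η, 0 ≤ η → ∃ᶠ X in atTop, HasSolutions k ζ η X j := by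
  constructor
  · intro h η hη
    obtain ⟨_, ⟨η', rfl, hη'⟩, hlt⟩ :=
      lt_sSup_iff.mp (h ▸ ENNReal.ofReal_lt_top : ENNReal.ofReal η < lambdaVec k j ζ)
    have hle : η ≤ η' := ((ENNReal.ofReal_lt_ofReal_iff_of_nonneg hη).mp hlt).le
    exact ((frequently_atTop.mpr hη').and_eventually (eventually_ge_atTop 1)).mono
      fun X ⟨hX, hX1⟩ => hX.mono_exponent hle hX1
  · intro h
    refine ENNReal.eq_top_of_forall_nnreal_le fun r => le_sSup ⟨r, ?_, ?_⟩
    · simp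
    · exact frequently_atTop.mp (h r r.2)

theorem lambdaHatVec_eq_zero_iff {j : ℕ} :
    lambdaHatVec k j ζ = 0 ↔ ∀ η, 0 < η → ∃ᶠ X in atTop, ¬HasSolutions k ζ η X j := by
  simp only [← not_eventually, eventually_atTop, lambdaHatVec, ← bot_eq_zero, sSup_eq_bot]
  constructor
  · rintro h η hη hev
    have := h _ ⟨η, rfl, hev⟩
    rw [bot_eq_zero, ENNReal.ofReal_eq_zero] at this
    linarith
  · rintro h _ ⟨η, rfl, hev⟩
    rw [bot_eq_zero, ENNReal.ofReal_eq_zero]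
    by_contra! hη
    exact h η hη hev

theorem deviation_smul (ζ : Fin k → ℝ) (a : ℤ) (v : Fin (k + 1) → ℤ) (m : Fin k) :
    deviation ζ (a • v) m = a * deviation ζ v m := by
  simp only [deviation, Pi.smul_apply, smul_eq_mul, Int.cast_mul]
  ring

theorem apply_zero_ne_zero_of_abs_deviation_lt_one {v : Fin (k + 1) → ℤ}
    (hv : v ≠ 0) (h : ∀ m, |deviation ζ v m| < 1) : v 0 ≠ 0 := by
  intro h0
  refine hv (funext fun p => Fin.cases h0 (fun m => ?_) p)
  have hm := h m
  rw [deviation, h0, Int.cast_zero, mul_zero, zero_sub, abs_neg, ← Int.cast_abs,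
    ← Int.cast_one, Int.cast_lt, Int.abs_lt_one_iff] at hm
  exact hm

theorem smul_eq_smul_of_abs_lt_one {u v : Fin (k + 1) → ℤ}
    (h : ∀ m, |(v 0 : ℝ)| * |deviation ζ u m| + |(u 0 : ℝ)| * |deviation ζ v m| < 1) :
    v 0 • u = u 0 • v := by
  funext p
  refine Fin.cases (mul_comm _ _) (fun m => ?_) p
  have hminor : ((v 0 * u m.succ - u 0 * v m.succ : ℤ) : ℝ) =
      u 0 * deviation ζ v m - v 0 * deviation ζ u m := by
    push_cast [deviation]
    ring
  have hlt : |((v 0 * u m.succ - u 0 * v m.succ : ℤ) : ℝ)| < 1 := by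
    rw [hminor]
    refine (abs_sub _ _).trans_lt ?_
    simpa only [abs_mul, add_comm] using h m
  rw [← Int.cast_abs, ← Int.cast_one, Int.cast_lt, Int.abs_lt_one_iff, sub_eq_zero] at hlt
  exact hlt

theorem not_linearIndependent_of_forall_smul_eq_smul {R M : Type*} [CommRing R] [IsDomain R]
    [AddCommGroup M] [Module R M] [Module.IsTorsionFree R M] {c : R} (hc : c ≠ 0)
    {u : Fin 2 → M} {v : M} (a : Fin 2 → R) (h : ∀ i, c • u i = a i • v) :
    ¬LinearIndependent R u := by
  intro hli
  have hrel : a 1 • u 0 + -(a 0 • u 1) = 0 := by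
    refine smul_right_injective M hc ?_
    simp only [smul_add, smul_neg, smul_zero, smul_comm c, h, smul_smul, mul_comm (a 1)]
    exact add_neg_cancel ((a 0 * a 1) • v)
  have ha := Fintype.linearIndependent_iff.mp hli ![a 1, -a 0] (by simpa [Fin.sum_univ_two])
  have ha0 : a 0 = 0 := neg_eq_zero.mp (ha 1)
  exact hli.ne_zero 0 ((smul_eq_zero_iff_right hc).mp (by rw [h, ha0, zero_smul]))

theorem abs_deviation_le_of_smul_eq_smul {u v : Fin (k + 1) → ℤ} {a b : ℤ}
    (ha : a ≠ 0) (hv0 : v 0 ≠ 0) (h : a • u = b • v) (huv : |u 0| ≤ |v 0|) (m : Fin k) :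
    |deviation ζ u m| ≤ |deviation ζ v m| := by
  have hba : |b| ≤ |a| := by
    have h0 : |a| * |u 0| = |b| * |v 0| := by
      rw [← abs_mul, ← abs_mul]
      exact congrArg abs (congrFun h 0)
    exact le_of_mul_le_mul_right (h0 ▸ mul_le_mul_of_nonneg_left huv (abs_nonneg a))
      (abs_pos.mpr hv0)
  have hdev : |(a : ℝ)| * |deviation ζ u m| = |(b : ℝ)| * |deviation ζ v m| := by
    rw [← abs_mul, ← abs_mul, ← deviation_smul, ← deviation_smul, h]
  refine le_of_mul_le_mul_left ?_ (abs_pos.mpr (Int.cast_ne_zero.mpr ha))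
  rw [hdev]
  exact mul_le_mul_of_nonneg_right (by exact_mod_cast hba) (abs_nonneg _)

theorem exists_abs_deviation_le_of_not_linearIndependent {v w : Fin (k + 1) → ℤ}
    (hv0 : v 0 ≠ 0) (hw : w ≠ 0) (h : ¬LinearIndependent ℤ ![w, v]) :
    ∃ u ≠ 0, |u 0| ≤ |w 0| ∧ ∀ m, |deviation ζ u m| ≤ |deviation ζ v m| := by
  rcases le_or_gt |w 0| |v 0| with hwv | hvw
  · obtain ⟨s, t, hst, hne⟩ : ∃ s t : ℤ, s • w + t • v = 0 ∧ ¬(s = 0 ∧ t = 0) := by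
      simpa [LinearIndependent.pair_iff] using h
    have hs : s ≠ 0 := by
      rintro rfl
      rw [zero_smul, zero_add, smul_eq_zero] at hst
      exact hst.elim (fun ht => hne ⟨rfl, ht⟩) fun hv => hv0 (by simp [hv])
    refine ⟨w, hw, le_rfl, abs_deviation_le_of_smul_eq_smul hs hv0 (b := -t) ?_ hwv⟩
    rw [neg_smul, eq_neg_iff_add_eq_zero, hst]
  · exact ⟨v, fun hv => hv0 (by simp [hv]), hvw.le, fun _ => le_rfl⟩

theorem abs_sub_lt_inv_of_floor_mul_eq {a b Q : ℝ} (hQ : 0 < Q) (h : ⌊a * Q⌋ = ⌊b * Q⌋) :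
    |a - b| < Q⁻¹ := by
  have := Int.abs_sub_lt_one_of_floor_eq_floor h
  rwa [← sub_mul, abs_mul, abs_of_pos hQ, ← lt_mul_inv_iff₀ hQ, one_mul] at this

/-- Dirichlet's theorem, by pigeonhole on the fractional parts of `ζ m * x`, `0 ≤ x ≤ Q ^ k`. -/
theorem exists_abs_deviation_lt (ζ : Fin k → ℝ) {Q : ℕ} (hQ : 0 < Q) :
    ∃ v : Fin (k + 1) → ℤ, v 0 ≠ 0 ∧ |(v 0 : ℝ)| ≤ (Q : ℝ) ^ k ∧
      ∀ m, |deviation ζ v m| < (Q : ℝ)⁻¹ := by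
  have hQ' : (0 : ℝ) < Q := Nat.cast_pos.mpr hQ
  let box : ℤ → Fin k → ℤ := fun x m => ⌊Int.fract (ζ m * x) * Q⌋
  have hbox : ∀ x ∈ Finset.Icc (0 : ℤ) (Q ^ k),
      box x ∈ Fintype.piFinset fun _ => Finset.Ico (0 : ℤ) Q := by
    intro x _
    simp only [Fintype.mem_piFinset, Finset.mem_Ico, box]
    refine fun m => ⟨Int.floor_nonneg.mpr (by positivity), Int.floor_lt.mpr ?_⟩
    push_cast
    exact mul_lt_of_lt_one_left hQ' (Int.fract_lt_one _)
  have hcard : (Fintype.piFinset fun _ : Fin k => Finset.Ico (0 : ℤ) Q).card <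
      (Finset.Icc (0 : ℤ) (Q ^ k)).card := by
    simp only [Fintype.card_piFinset, Int.card_Ico, Int.card_Icc, Finset.prod_const,
      Finset.card_univ, Fintype.card_fin, sub_zero, Int.toNat_natCast, ← Nat.cast_pow]
    omega
  obtain ⟨x, hx, y, hy, hxy, hbxy⟩ := Finset.exists_ne_map_eq_of_card_lt_of_maps_to hcard hbox
  refine ⟨Fin.cons (y - x) fun m => ⌊ζ m * y⌋ - ⌊ζ m * x⌋, sub_ne_zero.mpr hxy.symm, ?_, ?_⟩
  · rw [Finset.mem_Icc] at hx hy
    have : |y - x| ≤ (Q : ℤ) ^ k := abs_sub_le_iff.mpr ⟨by linarith, by linarith⟩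
    simpa only [Fin.cons_zero, ← Int.cast_abs, Int.cast_pow, Int.cast_natCast]
      using (Int.cast_le (R := ℝ)).mpr this
  · intro m
    have hdev : deviation ζ (Fin.cons (y - x) fun m => ⌊ζ m * y⌋ - ⌊ζ m * x⌋) m =
        Int.fract (ζ m * y) - Int.fract (ζ m * x) := by
      simp only [deviation, Fin.cons_zero, Fin.cons_succ, Int.fract]
      push_cast
      ring
    rw [hdev]
    exact abs_sub_lt_inv_of_floor_mul_eq hQ' (congrFun hbxy m).symm

theorem exists_abs_deviation_le_two_mul_rpow (ζ : Fin k → ℝ) (hk : 0 < k) {Y : ℝ}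
    (hY : 1 ≤ Y) : ∃ v : Fin (k + 1) → ℤ, v 0 ≠ 0 ∧ |(v 0 : ℝ)| ≤ Y ∧
      ∀ m, |deviation ζ v m| ≤ 2 * Y ^ (-(k : ℝ)⁻¹) := by
  set R := Y ^ (k : ℝ)⁻¹
  have hR : 1 ≤ R := Real.one_le_rpow hY (by positivity)
  have hQ : 0 < ⌊R⌋₊ := Nat.floor_pos.mpr hR
  have hQR : R < 2 * ⌊R⌋₊ := by
    have := Nat.lt_floor_add_one R
    have : (1 : ℝ) ≤ ⌊R⌋₊ := by exact_mod_cast hQ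
    linarith
  obtain ⟨v, hv0, hvQ, hvdev⟩ := exists_abs_deviation_lt ζ hQ
  refine ⟨v, hv0, ?_, fun m => (hvdev m).le.trans ?_⟩
  · calc |(v 0 : ℝ)| ≤ (⌊R⌋₊ : ℝ) ^ k := hvQ
      _ ≤ R ^ k := by gcongr; exact Nat.floor_le (by linarith)
      _ = Y := Real.rpow_inv_natCast_pow (by linarith) hk.ne'
  · rw [Real.rpow_neg (by linarith), ← div_eq_mul_inv, le_div_iff₀ (by linarith),
      inv_mul_le_iff₀ (by positivity)]
    linarith

theorem not_eventually_hasSolutions_two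
    (h : ∀ η, 0 ≤ η → ∃ᶠ X in atTop, HasSolutions k ζ η X 1) {η : ℝ} (hη : 0 < η) :
    ¬∀ᶠ Y in atTop, HasSolutions k ζ η Y 2 := by
  intro hev
  set b := 2 / η
  have hb : 0 < b := by positivity
  obtain ⟨X, hX1, hX2, hXb⟩ := ((h (1 + b) (by positivity)).and_eventually
    ((eventually_gt_atTop 2).and ((tendsto_rpow_atTop hb).eventually hev))).exists
  obtain ⟨v, hv, hvX, hvdev⟩ := hasSolutions_one_iff.mp hX1
  obtain ⟨u, hli, hu⟩ := hXb
  have hX : 0 < X := by linarith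
  have hv0 : v 0 ≠ 0 := apply_zero_ne_zero_of_abs_deviation_lt_one hv fun m =>
    (hvdev m).trans_lt (Real.rpow_lt_one_of_one_lt_of_neg (by linarith) (by linarith))
  -- `b = 2 / η` and the exponent `1 + b` make both terms of the minor bound equal to `X⁻¹`
  have hminor : ∀ i m,
      |(v 0 : ℝ)| * |deviation ζ (u i) m| + |(u i 0 : ℝ)| * |deviation ζ v m| < 1 :=
    fun i m => calc
      _ ≤ X * (X ^ b) ^ (-η) + X ^ b * X ^ (-(1 + b)) := by
        gcongr
        exacts [(hu i).2 m, (hu i).1, hvdev m]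
      _ = 2 * X⁻¹ := by
        have hbη : b * -η = -2 := by simp only [b]; field_simp
        rw [← Real.rpow_mul hX.le, hbη, ← Real.rpow_add hX, show b + -(1 + b) = -1 by ring,
          Real.rpow_neg hX.le, Real.rpow_two, Real.rpow_neg_one]
        field_simp
        ring
      _ < 1 := by
        rw [← div_eq_mul_inv, div_lt_one hX]
        exact hX2
  exact not_linearIndependent_of_forall_smul_eq_smul hv0 (fun i => u i 0)
    (fun i => smul_eq_smul_of_abs_lt_one (hminor i)) hli

theorem eventually_two_mul_rpow_neg_le {s t : ℝ} (h : t < s) :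
    ∀ᶠ Y : ℝ in atTop, 2 * Y ^ (-s) ≤ Y ^ (-t) := by
  filter_upwards [(tendsto_rpow_atTop (sub_pos.mpr h)).eventually_ge_atTop (2 : ℝ),
    eventually_gt_atTop (0 : ℝ)] with Y hY hY0
  calc 2 * Y ^ (-s) ≤ Y ^ (s - t) * Y ^ (-s) := by gcongr
    _ = Y ^ (-t) := by rw [← Real.rpow_add hY0]; ring_nf

theorem frequently_hasSolutions_one (hk : 0 < k)
    (h : ∀ ε, 0 < ε → ∃ᶠ Y in atTop, ¬HasSolutions k ζ ε Y 2) {η : ℝ} (hη : 0 ≤ η) :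
    ∃ᶠ X in atTop, HasSolutions k ζ η X 1 := by
  have hk' : (0 : ℝ) < k := Nat.cast_pos.mpr hk
  -- what matters is `a ≤ 1`, `a * η < 1 / k` and `ε < a / k`
  set a : ℝ := (2 * k * (η + 1))⁻¹
  set ε : ℝ := a * (k : ℝ)⁻¹ / 2
  have ha : 0 < a := by positivity
  have ha1 : a ≤ 1 := by
    refine inv_le_one_of_one_le₀ ?_
    nlinarith [(Nat.one_le_cast (α := ℝ)).mpr hk]
  have hε : 0 < ε := by positivity
  have hεk : ε < (k : ℝ)⁻¹ := by
    have : a * (k : ℝ)⁻¹ ≤ (k : ℝ)⁻¹ := mul_le_of_le_one_left (by positivity) ha1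
    have : 0 < (k : ℝ)⁻¹ := by positivity
    simp only [ε]
    linarith
  have haη : a * η < (k : ℝ)⁻¹ := by
    have hak : a * (2 * k * (η + 1)) = 1 := inv_mul_cancel₀ (by positivity)
    rw [← one_div, lt_div_iff₀ hk']
    nlinarith [mul_pos ha hk']
  have hlarge : ∀ᶠ Y : ℝ in atTop, 1 ≤ Y ∧ 2 * Y ^ (-(k : ℝ)⁻¹) ≤ Y ^ (-ε) ∧
      2 * Y ^ (-(a * (k : ℝ)⁻¹)) ≤ Y ^ (-ε) ∧ 2 * Y ^ (-(k : ℝ)⁻¹) ≤ Y ^ (-(a * η)) :=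
    (eventually_ge_atTop 1).and <| (eventually_two_mul_rpow_neg_le hεk).and <|
      (eventually_two_mul_rpow_neg_le (half_lt_self (by positivity))).and
      (eventually_two_mul_rpow_neg_le haη)
  refine (tendsto_rpow_atTop ha).frequently (((h ε hε).and_eventually hlarge).mono ?_)
  rintro Y ⟨hnot, hY, hv, hw, hu⟩
  obtain ⟨v, hv0, hvY, hvdev⟩ := exists_abs_deviation_le_two_mul_rpow ζ hk hY
  obtain ⟨w, hw0, hwY, hwdev⟩ :=
    exists_abs_deviation_le_two_mul_rpow ζ hk (Real.one_le_rpow hY ha.le)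
  rw [← Real.rpow_mul (by linarith), mul_neg] at hwdev
  have hvsol : IsSolution ζ ε Y v := ⟨hvY, fun m => (hvdev m).trans hv⟩
  have hwsol : IsSolution ζ ε Y w :=
    ⟨hwY.trans (Real.rpow_le_self_of_one_le hY ha1), fun m => (hwdev m).trans hw⟩
  obtain ⟨u, hu0, huw, hudev⟩ := exists_abs_deviation_le_of_not_linearIndependent hv0
    (fun h => hw0 (by simp [h]))
    fun hli => hnot (hasSolutions_two_of_linearIndependent hli hwsol hvsol)
  refine hasSolutions_one_iff.mpr ⟨u, hu0, ?_, fun m => ?_⟩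
  · exact le_trans (by exact_mod_cast huw) hwY
  · rw [← Real.rpow_mul (by linarith), ← neg_mul_eq_mul_neg]
    exact (hudev m).trans ((hvdev m).trans hu)

end

/-- Lemma: `λ_{k,1}(ζ⃗) = ∞` iff `λ̂_{k,2}(ζ⃗) = ⋯ = λ̂_{k,k+1}(ζ⃗) = 0`. -/
theorem stmt2 (k : ℕ) (hk : 0 < k) (ζ : Fin k → ℝ) :
    lambdaVec k 1 ζ = ⊤ ↔ ∀ j : ℕ, 2 ≤ j → j ≤ k + 1 → lambdaHatVec k j ζ = 0 := by
  have hhat : (∀ j : ℕ, 2 ≤ j → j ≤ k + 1 → lambdaHatVec k j ζ = 0) ↔ lambdaHatVec k 2 ζ = 0 :=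
    ⟨fun h => h 2 le_rfl (by omega),
      fun h j hj _ => le_zero_iff.mp (h ▸ lambdaHatVec_anti hj)⟩
  rw [hhat, lambdaVec_eq_top_iff, lambdaHatVec_eq_zero_iff]
  exact ⟨fun h η hη => not_eventually.mp (not_eventually_hasSolutions_two h hη),
    fun h η hη => frequently_hasSolutions_one hk h hη⟩
end

section
/- Let k be a positive integer and ζ an irrational real number with λ_{1,1}(ζ) ≥ k. Then λ̂_{k,1}(ζ) = 1/k. -/
open scoped ENNReal

/-! Dirichlet's pigeonhole principle gives `λ̂_{k,1}(ζ⃗) ≥ 1/k` for every `ζ⃗ ∈ ℝ^k`.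
Conversely, suppose that for `ζ⃗ = (ζ, …, ζ^k)` the system is solvable for all large `X` with an
exponent `η > 1/k`, and pick `1/η < β < α < k`. Since `λ_{1,1}(ζ) > α` and `ζ` is irrational,
there are arbitrarily large coprime `q, p` with `|ζ q - p| ≤ q^(-α)`. Take a solution
`(y_0, …, y_k)` at `X = q^β`: the numbers `q y_{j+1} - p y_j` are integers of absolute value
`< 1`, so `q y_{j+1} = p y_j`, hence `q^k ∣ p^k y_0` and `q^k ≤ |y_0| ≤ q^β < q^k`. -/

open Real Filter Topology

theorem hasSolutions_one_iff_s7 {k : ℕ} {ζ : Fin k → ℝ} {η X : ℝ} :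
    HasSolutions k ζ η X 1 ↔ ∃ w : Fin (k + 1) → ℤ, w ≠ 0 ∧ |(w 0 : ℝ)| ≤ X ∧
      ∀ m : Fin k, |ζ m * (w 0 : ℝ) - (w m.succ : ℝ)| ≤ X ^ (-η) := by
  simp only [HasSolutions, linearIndependent_unique_iff, Fin.forall_fin_one]
  exact ⟨fun ⟨v, hv, hX⟩ => ⟨v 0, hv, hX⟩, fun ⟨w, hw, hX⟩ => ⟨fun _ => w, hw, hX⟩⟩

theorem exists_abs_le_pow_abs_mul_sub_le {k : ℕ} (ζ : Fin k → ℝ) {Q : ℕ} (hQ : 0 < Q) :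
    ∃ x : ℤ, x ≠ 0 ∧ |x| ≤ Q ^ k ∧ ∀ m, ∃ y : ℤ, |ζ m * x - y| ≤ 1 / Q := by
  have hQ' : (0 : ℝ) < Q := by exact_mod_cast hQ
  -- pigeonhole: the fractional parts of `ζ m * n`, `0 ≤ n ≤ Q ^ k`, in a grid of mesh `1 / Q`
  let f : ℤ → Fin k → ℤ := fun n m => ⌊Int.fract (ζ m * n) * Q⌋
  have hf : ∀ n ∈ Finset.Icc (0 : ℤ) (Q ^ k),
      f n ∈ Fintype.piFinset fun _ => Finset.Ico (0 : ℤ) Q := fun n _ => by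
    simp only [Fintype.mem_piFinset, Finset.mem_Ico, f]
    exact fun m => ⟨Int.floor_nonneg.2 (by positivity),
      Int.floor_lt.2 (by push_cast; exact mul_lt_of_lt_one_left hQ' (Int.fract_lt_one _))⟩
  have hcard : (Fintype.piFinset fun _ : Fin k => Finset.Ico (0 : ℤ) Q).card <
      (Finset.Icc (0 : ℤ) (Q ^ k)).card := by
    simp [Fintype.card_piFinset, Int.card_Icc, Int.card_Ico]
  obtain ⟨a, ha, b, hb, hab, hfab⟩ := Finset.exists_ne_map_eq_of_card_lt_of_maps_to hcard hf
  rw [Finset.mem_Icc] at ha hb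
  refine ⟨a - b, sub_ne_zero.2 hab, abs_sub_le_iff.2 ⟨by linarith, by linarith⟩,
    fun m => ⟨⌊ζ m * a⌋ - ⌊ζ m * b⌋, ?_⟩⟩
  rw [le_div_iff₀ hQ']
  calc |ζ m * ((a - b : ℤ) : ℝ) - ((⌊ζ m * a⌋ - ⌊ζ m * b⌋ : ℤ) : ℝ)| * Q
      = |(ζ m * ((a - b : ℤ) : ℝ) - ((⌊ζ m * a⌋ - ⌊ζ m * b⌋ : ℤ) : ℝ)) * Q| := by
        rw [abs_mul, abs_of_pos hQ']
    _ = |Int.fract (ζ m * a) * Q - Int.fract (ζ m * b) * Q| := by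
        simp only [Int.fract]; push_cast; ring_nf
    _ ≤ 1 := (Int.abs_sub_lt_one_of_floor_eq_floor (congrFun hfab m)).le

theorem eventually_hasSolutions_one {k : ℕ} (hk : 0 < k) (ζ : Fin k → ℝ) {η : ℝ}
    (hη : η < 1 / k) : ∀ᶠ X in atTop, HasSolutions k ζ η X 1 := by
  have hk' : (0 : ℝ) < k := by exact_mod_cast hk
  filter_upwards [eventually_gt_atTop 0,
    (tendsto_rpow_atTop (by positivity : (0 : ℝ) < 1 / k)).eventually_ge_atTop 2,
    (tendsto_rpow_atTop (sub_pos.2 hη)).eventually_ge_atTop 2] with X hX hY hXη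
  set Y := X ^ (1 / k : ℝ)
  set Q := ⌊Y⌋₊
  have hQ : 0 < Q := Nat.floor_pos.2 (by linarith)
  have hQY : (Q : ℝ) ≤ Y := Nat.floor_le (by linarith)
  obtain ⟨x, hx0, hxQ, hy⟩ := exists_abs_le_pow_abs_mul_sub_le ζ hQ
  choose y hy using hy
  refine hasSolutions_one_iff_s7.2 ⟨Fin.cons x y, fun h => hx0 (by simpa using congrFun h 0), ?_,
    fun m => ?_⟩ <;> simp only [Fin.cons_zero, Fin.cons_succ]
  · calc |(x : ℝ)| ≤ (Q : ℝ) ^ k := by exact_mod_cast hxQ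
      _ ≤ Y ^ k := by gcongr
      _ = X := by rw [← rpow_natCast, ← rpow_mul hX.le, one_div_mul_cancel hk'.ne', rpow_one]
  · have hY2 : Y ≤ 2 * Q := by linarith [Nat.lt_floor_add_one Y, (Nat.one_le_cast (α := ℝ)).2 hQ]
    calc |ζ m * x - y m| ≤ 1 / Q := hy m
      _ ≤ 2 / Y := by rw [div_le_div_iff₀ (by positivity) (by linarith)]; linarith
      _ ≤ X ^ (1 / k - η : ℝ) / Y := by gcongr
      _ = X ^ (-η) := by rw [← rpow_sub hX]; ring_nf

theorem Irrational.exists_pos_le_abs_mul_sub {ζ : ℝ} (hζ : Irrational ζ) (M : ℝ) :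
    ∃ c > 0, ∀ q p : ℤ, 0 < q → (q : ℝ) < M → c ≤ |ζ * q - p| := by
  obtain ⟨c, hc0, hc⟩ := Finset.exists_between' {0}
    ((Finset.Ico 1 ⌈M⌉).image fun q : ℤ => |ζ * q - round (ζ * q)|) (by
      simp only [Finset.mem_singleton, Finset.mem_image, Finset.mem_Ico]
      rintro _ rfl _ ⟨q, ⟨hq, -⟩, rfl⟩
      exact abs_pos.2 (sub_ne_zero.2 ((hζ.mul_intCast (by omega)).ne_int _)))
  refine ⟨c, by simpa using hc0, fun q p hq hqM => ?_⟩
  calc c ≤ |ζ * q - round (ζ * q)| :=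
        (hc _ (Finset.mem_image_of_mem _ (Finset.mem_Ico.2 ⟨hq, Int.lt_ceil.2 hqM⟩))).le
    _ ≤ |ζ * q - p| := round_le _ _

theorem exists_isCoprime_abs_mul_sub_le (ζ : ℝ) {x : ℤ} (hx : x ≠ 0) (y : ℤ) :
    ∃ q p : ℤ, 0 < q ∧ q ≤ |x| ∧ IsCoprime p q ∧ |ζ * q - p| ≤ |ζ * x - y| := by
  set r : ℚ := y / x
  have hden : (r.den : ℤ) ≤ |x| := by
    have := Rat.den_dvd y x
    rw [Rat.divInt_eq_div] at this
    exact Int.le_of_dvd (abs_pos.2 hx) ((dvd_abs _ _).2 this)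
  refine ⟨r.den, r.num, by positivity, hden, r.isCoprime_num_den, ?_⟩
  have hr : (r : ℝ) = r.num / r.den := by exact_mod_cast r.num_div_den.symm
  have hr' : (r : ℝ) = y / x := by simp [r]
  have hx' : (x : ℝ) ≠ 0 := by exact_mod_cast hx
  calc |ζ * (r.den : ℤ) - r.num| = |(r.den : ℝ) * (ζ - r)| := by
        rw [hr]; congr 1; field_simp; push_cast; ring
    _ = r.den * |ζ - r| := by rw [abs_mul, Nat.abs_cast]
    _ ≤ |(x : ℝ)| * |ζ - r| := by gcongr; exact_mod_cast hden
    _ = |ζ * x - y| := by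
        rw [hr', ← abs_mul]; congr 1; field_simp

theorem exists_isCoprime_abs_mul_sub_le_rpow {ζ : ℝ} (hζ : Irrational ζ) {α : ℝ}
    (hα : ENNReal.ofReal α < lambdaPow 1 1 ζ) (M : ℝ) :
    ∃ q p : ℤ, M ≤ q ∧ 0 < q ∧ IsCoprime p q ∧ |ζ * q - p| ≤ (q : ℝ) ^ (-α) := by
  obtain ⟨c, hc, hcM⟩ := hζ.exists_pos_le_abs_mul_sub M
  obtain ⟨-, ⟨η, rfl, hη⟩, hαη⟩ := lt_sSup_iff.1 hα
  obtain ⟨hαη, hη0⟩ := (ENNReal.ofReal_lt_ofReal_iff').1 hαη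
  obtain ⟨X₀, hX₀⟩ := eventually_atTop.1 <| (eventually_ge_atTop 1).and <|
    (tendsto_rpow_neg_atTop hη0).eventually (gt_mem_nhds (lt_min hc one_pos))
  obtain ⟨X, hXX₀, hsol⟩ := hη X₀
  obtain ⟨hX1, hXc⟩ := hX₀ X hXX₀
  obtain ⟨w, hw0, hwX, hw⟩ := hasSolutions_one_iff_s7.1 hsol
  have hxy : |ζ * w 0 - w 1| ≤ X ^ (-η) := by simpa using hw 0
  have hx : w 0 ≠ 0 := by
    intro hx
    refine hw0 (funext fun i => ?_)
    fin_cases i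
    · exact hx
    · have : |(w 1 : ℝ)| < 1 := by
        simpa [hx] using hxy.trans_lt (hXc.trans_le (min_le_right _ _))
      exact Int.abs_lt_one_iff.1 (by exact_mod_cast this)
  obtain ⟨q, p, hq, hqx, hcop, hqxy⟩ := exists_isCoprime_abs_mul_sub_le ζ hx (w 1)
  have hqp : |ζ * q - p| ≤ X ^ (-η) := hqxy.trans hxy
  refine ⟨q, p, ?_, hq, hcop, ?_⟩
  · by_contra! hqM
    linarith [hcM q p hq hqM, hXc.trans_le (min_le_left _ _)]
  · have hq1 : (1 : ℝ) ≤ q := by exact_mod_cast hq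
    calc |ζ * q - p| ≤ X ^ (-η) := hqp
      _ ≤ (q : ℝ) ^ (-η) := by
        refine rpow_le_rpow_of_nonpos (by positivity) ?_ (by linarith)
        calc (q : ℝ) ≤ |(w 0 : ℝ)| := by exact_mod_cast hqx
          _ ≤ X := hwX
      _ ≤ (q : ℝ) ^ (-α) := rpow_le_rpow_of_exponent_le hq1 (by linarith)

theorem pow_mul_eq_pow_mul_of_mul_succ_eq {k : ℕ} {p q : ℤ} {w : Fin (k + 1) → ℤ}
    (h : ∀ j : Fin k, q * w j.succ = p * w j.castSucc) (j : Fin (k + 1)) :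
    q ^ (j : ℕ) * w j = p ^ (j : ℕ) * w 0 := by
  induction j using Fin.induction with
  | zero => simp
  | succ j ih =>
    rw [Fin.val_castSucc] at ih
    calc q ^ (j.succ : ℕ) * w j.succ = q ^ (j : ℕ) * (q * w j.succ) := by simp [pow_succ]; ring
      _ = p * (q ^ (j : ℕ) * w j.castSucc) := by rw [h]; ring
      _ = p ^ (j.succ : ℕ) * w 0 := by rw [ih]; simp [pow_succ]; ring

theorem pow_le_abs_of_mul_succ_eq {k : ℕ} {p q : ℤ} {w : Fin (k + 1) → ℤ} (hq : 0 < q)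
    (hpq : IsCoprime p q) (hw : w ≠ 0) (h : ∀ j : Fin k, q * w j.succ = p * w j.castSucc) :
    q ^ k ≤ |w 0| := by
  have hgeom := pow_mul_eq_pow_mul_of_mul_succ_eq h
  have hw0 : w 0 ≠ 0 := by
    refine fun h0 => hw (funext fun j => ?_)
    simpa [h0, hq.ne'] using hgeom j
  have hdvd : q ^ k ∣ w 0 :=
    (hpq.pow.symm).dvd_of_dvd_mul_left ⟨w (Fin.last k), by simpa using (hgeom (Fin.last k)).symm⟩
  exact Int.le_of_dvd (abs_pos.2 hw0) ((dvd_abs _ _).2 hdvd)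

theorem mul_succ_eq_of_abs_sub_le {k : ℕ} {ζ E X : ℝ} {p q : ℤ} {w : Fin (k + 1) → ℤ}
    (hq : 0 < q) (hwX : |(w 0 : ℝ)| ≤ X)
    (hw : ∀ m : Fin k, |ζ ^ ((m : ℕ) + 1) * (w 0 : ℝ) - (w m.succ : ℝ)| ≤ E)
    (hsmall : (|(p : ℝ)| + q) * E + |ζ * q - p| * (|ζ| + 1) ^ k * X < 1) (j : Fin k) :
    q * w j.succ = p * w j.castSucc := by
  have hE : 0 ≤ E := (abs_nonneg _).trans (hw j)
  have he : ∀ i : Fin (k + 1), |ζ ^ (i : ℕ) * (w 0 : ℝ) - (w i : ℝ)| ≤ E :=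
    Fin.cases (by simpa using hE) hw
  set t := ζ ^ (j : ℕ) * (w 0 : ℝ)
  have ht : |t| ≤ (|ζ| + 1) ^ k * X := by
    rw [abs_mul, abs_pow]
    have hζ1 : 1 ≤ |ζ| + 1 := by linarith [abs_nonneg ζ]
    refine mul_le_mul ?_ hwX (abs_nonneg _) (by positivity)
    calc |ζ| ^ (j : ℕ) ≤ (|ζ| + 1) ^ (j : ℕ) := by gcongr; linarith
      _ ≤ (|ζ| + 1) ^ k := pow_le_pow_right₀ hζ1 j.isLt.le
  -- the identity `q a - p b = p (t - b) + (ζ q - p) t - q (ζ t - a)` with `a, b ≈ ζ t, t`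
  rw [← sub_eq_zero, ← Int.abs_lt_one_iff, ← Int.cast_lt (R := ℝ)]
  calc ((|q * w j.succ - p * w j.castSucc| : ℤ) : ℝ)
      = |p * (t - w j.castSucc) + (ζ * q - p) * t - q * (ζ * t - w j.succ)| := by
        push_cast; ring_nf
    _ ≤ |(p : ℝ)| * E + |ζ * q - p| * ((|ζ| + 1) ^ k * X) + q * E := by
        refine (abs_sub _ _).trans (add_le_add ((abs_add_le _ _).trans (add_le_add ?_ ?_)) ?_)
        · rw [abs_mul]
          exact mul_le_mul_of_nonneg_left (by simpa [t] using he j.castSucc) (abs_nonneg _)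
        · rw [abs_mul]; exact mul_le_mul_of_nonneg_left ht (abs_nonneg _)
        · rw [abs_mul, abs_of_pos (by exact_mod_cast hq)]
          refine mul_le_mul_of_nonneg_left ?_ (by positivity)
          simpa [t, pow_succ, mul_comm, mul_left_comm, mul_assoc] using he j.succ
    _ < ((1 : ℤ) : ℝ) := by push_cast; linarith

theorem recurrence_error_le {ζ p q α β η C : ℝ} (hC : 0 ≤ C) (hq : 1 ≤ q) (hα : 0 ≤ α)
    (happrox : |ζ * q - p| ≤ q ^ (-α)) :
    (|p| + q) * (q ^ β) ^ (-η) + |ζ * q - p| * C * q ^ β ≤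
      (|ζ| + 2) * q ^ (-(β * η - 1)) + C * q ^ (-(α - β)) := by
  have hq0 : 0 < q := by linarith
  have hp : |p| ≤ (|ζ| + 1) * q := by
    have : |ζ * q - p| ≤ 1 := happrox.trans (rpow_le_one_of_one_le_of_nonpos hq (by linarith))
    calc |p| ≤ |ζ * q| + |ζ * q - p| := by simpa using abs_sub (ζ * q) (ζ * q - p)
      _ ≤ |ζ| * q + q := by rw [abs_mul, abs_of_pos hq0]; linarith
      _ = (|ζ| + 1) * q := by ring
  calc (|p| + q) * (q ^ β) ^ (-η) + |ζ * q - p| * C * q ^ β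
      ≤ (|ζ| + 2) * q * q ^ (-(β * η)) + q ^ (-α) * C * q ^ β := by
        rw [← rpow_mul hq0.le, ← neg_mul_eq_mul_neg]
        gcongr; linarith
    _ = (|ζ| + 2) * q ^ (-(β * η - 1)) + C * q ^ (-(α - β)) := by
        rw [neg_sub, neg_sub, rpow_sub hq0, rpow_sub hq0, rpow_one, rpow_neg hq0.le,
          rpow_neg hq0.le]
        field_simp

theorem le_one_div_of_eventually_hasSolutions {k : ℕ} (hk : 0 < k) {ζ : ℝ} (hζ : Irrational ζ)
    (h : (k : ℝ≥0∞) ≤ lambdaPow 1 1 ζ) {η : ℝ}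
    (hη : ∀ᶠ X in atTop, HasSolutions k (fun i => ζ ^ ((i : ℕ) + 1)) η X 1) : η ≤ 1 / k := by
  have hk' : (0 : ℝ) < k := by exact_mod_cast hk
  by_contra! hlt
  have hη0 : 0 < η := (by positivity : (0 : ℝ) < 1 / k).trans hlt
  obtain ⟨β, hηβ, hβk⟩ : ∃ β, 1 / η < β ∧ β < k := exists_between ((one_div_lt hη0 hk').2 hlt)
  obtain ⟨α, hβα, hαk⟩ := exists_between hβk
  have hβ : 0 < β := (by positivity : (0 : ℝ) < 1 / η).trans hηβ
  have hβη : 0 < β * η - 1 := sub_pos.2 ((div_lt_iff₀ hη0).1 hηβ)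
  set C := (|ζ| + 1) ^ k
  have hsmall : Tendsto (fun t : ℝ => (|ζ| + 2) * t ^ (-(β * η - 1)) + C * t ^ (-(α - β)))
      atTop (𝓝 0) := by
    simpa using ((tendsto_rpow_neg_atTop hβη).const_mul _).add
      ((tendsto_rpow_neg_atTop (sub_pos.2 hβα)).const_mul C)
  obtain ⟨M, hM⟩ := eventually_atTop.1 <| (eventually_gt_atTop (1 : ℝ)).and <|
    ((tendsto_rpow_atTop hβ).eventually hη).and (hsmall.eventually_lt_const one_pos)
  have hα : ENNReal.ofReal α < lambdaPow 1 1 ζ :=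
    ((ENNReal.ofReal_lt_ofReal_iff hk').2 hαk).trans_le (by rwa [ENNReal.ofReal_natCast])
  obtain ⟨q, p, hqM, hq, hpq, happrox⟩ := exists_isCoprime_abs_mul_sub_le_rpow hζ hα M
  obtain ⟨hq1, hsol, hlt1⟩ := hM (q : ℝ) hqM
  obtain ⟨w, hw0, hwX, hw⟩ := hasSolutions_one_iff_s7.1 hsol
  have hrec := mul_succ_eq_of_abs_sub_le hq hwX hw <|
    (recurrence_error_le (by positivity) hq1.le (hβ.trans hβα).le happrox).trans_lt hlt1
  have hqk := pow_le_abs_of_mul_succ_eq hq hpq hw0 hrec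
  have : (q : ℝ) ^ (k : ℝ) ≤ (q : ℝ) ^ β := by
    rw [rpow_natCast]
    exact (by exact_mod_cast hqk : (q : ℝ) ^ k ≤ |(w 0 : ℝ)|).trans hwX
  exact absurd this (not_le.2 (rpow_lt_rpow_of_exponent_lt hq1 hβk))

theorem lambdaHatVec_eq_ofReal {k j : ℕ} {ζ : Fin k → ℝ} {c : ℝ}
    (hlow : ∀ η < c, ∀ᶠ X in atTop, HasSolutions k ζ η X j)
    (hup : ∀ η, (∀ᶠ X in atTop, HasSolutions k ζ η X j) → η ≤ c) :
    lambdaHatVec k j ζ = ENNReal.ofReal c := by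
  refine le_antisymm (sSup_le ?_) (le_of_forall_lt fun e he => ?_)
  · rintro _ ⟨η, rfl, hη⟩
    exact ENNReal.ofReal_le_ofReal (hup η (eventually_atTop.2 hη))
  · obtain ⟨η, -, heη, hηc⟩ := ENNReal.lt_iff_exists_real_btwn.1 he
    refine heη.trans_le (le_sSup ⟨η, rfl, eventually_atTop.1 (hlow η ?_)⟩)
    exact ((ENNReal.ofReal_lt_ofReal_iff').1 hηc).1

/-- Corollary: if `λ_{1,1}(ζ) ≥ k` for an irrational real `ζ`, then `λ̂_{k,1}(ζ) = 1/k`. -/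
theorem stmt7 (k : ℕ) (hk : 0 < k) (ζ : ℝ) (hζ : Irrational ζ)
    (h : (k : ℝ≥0∞) ≤ lambdaPow 1 1 ζ) :
    lambdaHatPow k 1 ζ = 1 / (k : ℝ≥0∞) := by
  have hk' : (0 : ℝ) < k := by exact_mod_cast hk
  rw [lambdaHatPow, lambdaHatVec_eq_ofReal (c := 1 / k)
    (fun η hη => eventually_hasSolutions_one hk _ hη)
    (fun η hη => le_one_div_of_eventually_hasSolutions hk hζ h hη),
    ENNReal.ofReal_div_of_pos hk', ENNReal.ofReal_one, ENNReal.ofReal_natCast]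
end

section
/- Let q_1, q_2, … be positive integers such that q_l divides q_{l+1} and q_l < q_{l+1} for all l ≥ 1, and suppose that for every C > 0 there exists an index n with (log q_{n+1})/(log q_n) > C. Then the series Σ_{l≥1} 1/q_l converges and its sum ζ = Σ_{l≥1} 1/q_l is a Liouville number. -/
/-!
Since `q l ∣ q (l + 1)` and `q l < q (l + 1)`, we have `q (l + 1) ≥ 2 * q l`, so the series
converges and its tail after index `N` lies in `(0, 2 / q (N + 1)]`. Because every `q l` with
`l ≤ N` divides `q N`, the partial sum up to `N` is a fraction `a / q N`. Choosing `N` with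
`log q (N + 1) > (n + 1) * log q N` makes the error smaller than `2 / q N ^ (n + 1) ≤ 1 / q N ^ n`.
-/

open scoped ENNReal

theorem Nat.two_mul_le_of_dvd_of_lt {a b : ℕ} (ha : 0 < a) (hdvd : a ∣ b) (hlt : a < b) :
    2 * a ≤ b := by
  obtain ⟨c, rfl⟩ := hdvd
  have hc : 2 ≤ c := by
    by_contra! hc
    interval_cases c <;> omega
  nlinarith

theorem Real.one_lt_and_pow_lt_of_lt_log_div_log {a b : ℝ} {n : ℕ} (ha : 1 ≤ a) (hb : 0 < b)
    (h : (n : ℝ) < Real.log b / Real.log a) : 1 < a ∧ a ^ n < b := by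
  have hlog_pos : 0 < Real.log a := by
    rcases (Real.log_nonneg ha).eq_or_lt with hlog | hlog
    · rw [← hlog, div_zero] at h
      exact absurd h (not_lt.mpr n.cast_nonneg)
    · exact hlog
  have ha_pos : 0 < a := by linarith
  refine ⟨(Real.log_pos_iff ha_pos.le).mp hlog_pos, ?_⟩
  rw [← Real.log_lt_log_iff (by positivity) hb, Real.log_pow]
  exact (lt_div_iff₀ hlog_pos).mp h

section HalvingSequence

variable {u : ℕ → ℝ} (hu : ∀ k, 0 ≤ u k) (hhalf : ∀ k, u (k + 1) ≤ u k / 2)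
include hhalf

theorem le_half_pow_mul_of_succ_le_half (k : ℕ) : u k ≤ (1 / 2) ^ k * u 0 :=
  le_geom (by norm_num) k fun j _ => by linarith [hhalf j]

include hu

theorem summable_of_succ_le_half : Summable u :=
  (summable_geometric_two.mul_right (u 0)).of_nonneg_of_le hu
    (le_half_pow_mul_of_succ_le_half hhalf)

theorem tsum_le_two_mul_of_succ_le_half : ∑' k, u k ≤ 2 * u 0 := by
  calc ∑' k, u k ≤ ∑' k, (1 / 2 : ℝ) ^ k * u 0 :=
        (summable_of_succ_le_half hu hhalf).tsum_le_tsum (le_half_pow_mul_of_succ_le_half hhalf)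
          (summable_geometric_two.mul_right (u 0))
    _ = 2 * u 0 := by rw [tsum_mul_right, tsum_geometric_two]

end HalvingSequence

theorem exists_int_sum_one_div_eq {ι : Type*} (s : Finset ι) (q : ι → ℕ) {d : ℕ} (hd : d ≠ 0)
    (hdvd : ∀ i ∈ s, q i ∣ d) : ∃ a : ℤ, ∑ i ∈ s, (1 : ℝ) / q i = a / d := by
  refine ⟨∑ i ∈ s, ((d / q i : ℕ) : ℤ), ?_⟩
  rw [Int.cast_sum, Finset.sum_div]
  refine Finset.sum_congr rfl fun i hi => ?_
  have hqi : (q i : ℝ) ≠ 0 := Nat.cast_ne_zero.mpr (ne_zero_of_dvd_ne_zero hd (hdvd i hi))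
  rw [Int.cast_natCast, Nat.cast_div (hdvd i hi) hqi]
  field_simp

section DivisibilityChain

variable {q : ℕ → ℕ} (hpos : ∀ l, 0 < q l) (hdvd : ∀ l, q l ∣ q (l + 1))
  (hlt : ∀ l, q l < q (l + 1))
include hpos hdvd hlt

theorem one_div_succ_le_half (l : ℕ) : (1 : ℝ) / q (l + 1) ≤ 1 / q l / 2 := by
  have h2 : (2 * q l : ℝ) ≤ q (l + 1) := by
    exact_mod_cast Nat.two_mul_le_of_dvd_of_lt (hpos l) (hdvd l) (hlt l)
  have hql : (0 : ℝ) < q l := by exact_mod_cast hpos l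
  calc (1 : ℝ) / q (l + 1) ≤ 1 / (2 * q l) := one_div_le_one_div_of_le (by positivity) h2
    _ = 1 / q l / 2 := by ring

theorem summable_one_div_of_dvd_of_lt : Summable fun l => (1 : ℝ) / q l :=
  summable_of_succ_le_half (fun _ => by positivity) (one_div_succ_le_half hpos hdvd hlt)

theorem exists_int_tsum_one_div_sub_mem_Ioc (N : ℕ) :
    ∃ a : ℤ, (∑' l, (1 : ℝ) / q l) - a / q N ∈ Set.Ioc (0 : ℝ) (2 / q (N + 1)) := by
  have hsum := summable_one_div_of_dvd_of_lt hpos hdvd hlt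
  obtain ⟨a, ha⟩ := exists_int_sum_one_div_eq (Finset.range (N + 1)) q (hpos N).ne' fun l hl =>
    Nat.rel_of_forall_rel_succ_of_le (· ∣ ·) hdvd (Nat.lt_succ_iff.mp (Finset.mem_range.mp hl))
  refine ⟨a, ?_⟩
  rw [← ha, ← hsum.sum_add_tsum_nat_add (N + 1), add_sub_cancel_left]
  constructor
  · have hq : (0 : ℝ) < q (0 + (N + 1)) := by exact_mod_cast hpos _
    exact ((summable_nat_add_iff (N + 1)).mpr hsum).tsum_pos (fun _ => by positivity) 0
      (by positivity)
  · simpa only [zero_add, mul_one_div] using tsum_le_two_mul_of_succ_le_half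
      (u := fun j => (1 : ℝ) / q (j + (N + 1))) (fun _ => by positivity)
      fun j => by simpa only [add_right_comm] using one_div_succ_le_half hpos hdvd hlt (j + (N + 1))

end DivisibilityChain

/-- The sequence is indexed from `0`: `q 0` is the paper's `q_1`. -/
theorem stmt13 (q : ℕ → ℕ) (hpos : ∀ l, 0 < q l)
    (hdvd : ∀ l, q l ∣ q (l + 1)) (hlt : ∀ l, q l < q (l + 1))
    (hC : ∀ C : ℝ, 0 < C → ∃ n : ℕ, C < Real.log (q (n + 1)) / Real.log (q n)) :
    Summable (fun l : ℕ => (1 : ℝ) / q l) ∧ Liouville (∑' l : ℕ, (1 : ℝ) / q l) := by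
  refine ⟨summable_one_div_of_dvd_of_lt hpos hdvd hlt, fun n => ?_⟩
  obtain ⟨N, hN⟩ := hC ((n + 1 : ℕ) : ℝ) (by positivity)
  obtain ⟨hqN, hpow⟩ := Real.one_lt_and_pow_lt_of_lt_log_div_log
    (by exact_mod_cast hpos N) (by exact_mod_cast hpos (N + 1)) hN
  obtain ⟨a, happrox_pos, happrox_le⟩ := exists_int_tsum_one_div_sub_mem_Ioc hpos hdvd hlt N
  have hqN_two : (2 : ℝ) ≤ q N := by exact_mod_cast Nat.one_lt_cast.mp hqN
  refine ⟨a, q N, by exact_mod_cast hqN, fun h => ?_, ?_⟩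
  · rw [h, Int.cast_natCast, sub_self] at happrox_pos
    exact happrox_pos.false
  rw [Int.cast_natCast, abs_of_pos happrox_pos]
  calc _ ≤ 2 / (q (N + 1) : ℝ) := happrox_le
    _ < 2 / (q N : ℝ) ^ (n + 1) := by gcongr
    _ ≤ 1 / (q N : ℝ) ^ n := by
      rw [pow_succ, div_le_div_iff₀ (by positivity) (by positivity)]
      nlinarith [pow_pos (show (0 : ℝ) < q N by positivity) n]
end

section
/- Let k be a positive integer and let q_1, q_2, … be positive integers such that q_l divides q_{l+1} and q_l < q_{l+1} for all l ≥ 1, and set ζ = Σ_{l≥1} 1/q_l (the series converges since q_{l+1} ≥ 2·q_l). For any index n with (log q_{n+2})/(log q_{n+1}) > k+1, putting U = q_n, V = q_{n+1} and A = q_n·Σ_{l=1}^{n} 1/q_l (an integer), one has |ζ − (A/U + 1/V)| ≤ 2/q_{n+2} < 2·V^{−(k+1)}. -/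
open scoped ENNReal

/-- With `U = q n`, `V = q (n+1)` and `A = q n · Σ_{l=0}^{n} 1/q_l` (an integer), one has
`|ζ − (A/U + 1/V)| ≤ 2/q_{n+2} < 2·V^(−(k+1))` (the sequence `q` is indexed from `0`). -/
theorem stmt15 (k : ℕ) (hk : 0 < k) (q : ℕ → ℕ) (hpos : ∀ l, 0 < q l)
    (hdvd : ∀ l, q l ∣ q (l + 1)) (hlt : ∀ l, q l < q (l + 1))
    (n : ℕ) (hn : (k + 1 : ℝ) < Real.log (q (n + 2)) / Real.log (q (n + 1)))
    (ζ : ℝ) (hζ : ζ = ∑' l : ℕ, (1 : ℝ) / q l)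
    (A : ℝ) (hA : A = (q n : ℝ) * ∑ l ∈ Finset.range (n + 1), (1 : ℝ) / q l) :
    Summable (fun l : ℕ => (1 : ℝ) / q l) ∧
    (∃ a : ℤ, (a : ℝ) = A) ∧
    |ζ - (A / (q n : ℝ) + 1 / (q (n + 1) : ℝ))| ≤ 2 / (q (n + 2) : ℝ) ∧
    (2 : ℝ) / (q (n + 2) : ℝ) < 2 * (q (n + 1) : ℝ) ^ (-(k + 1 : ℤ)) := by
  have hq2 : ∀ l, 2 * q l ≤ q (l + 1) := by
    intro l
    obtain ⟨c, hc⟩ := hdvd l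
    have h1 := hlt l
    have h0 := hpos l
    have hc2 : 2 ≤ c := by nlinarith
    nlinarith
  have hgrow : ∀ l m, q l * 2 ^ m ≤ q (l + m) := by
    intro l m
    induction m with
    | zero => simp
    | succ m ih =>
      have := hq2 (l + m)
      calc q l * 2 ^ (m + 1) = 2 * (q l * 2 ^ m) := by ring
        _ ≤ 2 * q (l + m) := by omega
        _ ≤ q (l + m + 1) := this
  have hdvd2 : ∀ l m, q l ∣ q (l + m) := by
    intro l m
    induction m with
    | zero => simp
    | succ m ih => exact ih.trans (hdvd (l + m))
  have hposR : ∀ l, (0 : ℝ) < q l := fun l => by exact_mod_cast hpos l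
  -- Summability
  have hle : ∀ l : ℕ, (1 : ℝ) / q l ≤ (1 / 2) ^ l := by
    intro l
    have h2 : (2 : ℕ) ^ l ≤ q l := by
      have := hgrow 0 l
      have := hpos 0
      simpa using le_trans (by nlinarith [Nat.one_le_two_pow (n := l)]) (hgrow 0 l)
    rw [div_pow, one_pow]
    apply one_div_le_one_div_of_le
    · positivity
    · exact_mod_cast h2
  have hsum : Summable (fun l : ℕ => (1 : ℝ) / q l) := by
    apply Summable.of_nonneg_of_le (fun l => by positivity) hle
    exact summable_geometric_of_lt_one (by norm_num) (by norm_num)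
  refine ⟨hsum, ?_, ?_, ?_⟩
  · -- A is an integer
    refine ⟨(∑ l ∈ Finset.range (n + 1), q n / q l : ℕ), ?_⟩
    rw [hA, Finset.mul_sum, Int.cast_natCast, Nat.cast_sum]
    apply Finset.sum_congr rfl
    intro l hl
    have hl' : l ≤ n := Nat.lt_succ_iff.mp (Finset.mem_range.mp hl)
    obtain ⟨m, rfl⟩ := Nat.exists_eq_add_of_le hl'
    rw [Nat.cast_div (hdvd2 l m) (by exact_mod_cast (hpos l).ne' : (q l : ℝ) ≠ 0)]
    ring
  · -- main bound
    have hUne : (q n : ℝ) ≠ 0 := (hposR n).ne'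
    have hAU : A / (q n : ℝ) = ∑ l ∈ Finset.range (n + 1), (1 : ℝ) / q l := by
      rw [hA]; field_simp
    have hsplit := Summable.sum_add_tsum_nat_add (n + 2) hsum
    have htail_le : ∀ i : ℕ, (1 : ℝ) / q (i + (n + 2)) ≤ (1 / 2) ^ i * (1 / q (n + 2)) := by
      intro i
      have hg : q (n + 2) * 2 ^ i ≤ q (n + 2 + i) := hgrow (n + 2) i
      have hg' : q (n + 2) * 2 ^ i ≤ q (i + (n + 2)) := by rwa [Nat.add_comm (n+2) i] at hg
      rw [div_pow, one_pow, div_mul_div_comm, one_mul]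
      apply one_div_le_one_div_of_le
      · exact mul_pos (by positivity) (hposR (n + 2))
      · calc ((2:ℝ) ^ i * q (n + 2)) = ((q (n + 2) * 2 ^ i : ℕ) : ℝ) := by push_cast; ring
          _ ≤ _ := by exact_mod_cast hg'
    have hsumtail : Summable (fun i : ℕ => (1 : ℝ) / q (i + (n + 2))) :=
      hsum.comp_injective (add_left_injective (n + 2))
    have hsumgeo : Summable (fun i : ℕ => ((1 : ℝ) / 2) ^ i * (1 / q (n + 2))) :=
      (summable_geometric_of_lt_one (by norm_num) (by norm_num)).mul_right _
    have htail_bound : (∑' i : ℕ, (1 : ℝ) / q (i + (n + 2))) ≤ 2 / q (n + 2) := by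
      calc (∑' i : ℕ, (1 : ℝ) / q (i + (n + 2)))
          ≤ ∑' i : ℕ, ((1 : ℝ) / 2) ^ i * (1 / q (n + 2)) :=
            Summable.tsum_le_tsum htail_le hsumtail hsumgeo
        _ = (∑' i : ℕ, ((1 : ℝ) / 2) ^ i) * (1 / q (n + 2)) := tsum_mul_right
        _ = 2 / q (n + 2) := by rw [tsum_geometric_of_lt_one (by norm_num) (by norm_num)]; ring
    have htail_nonneg : (0 : ℝ) ≤ ∑' i : ℕ, (1 : ℝ) / q (i + (n + 2)) :=
      tsum_nonneg (fun i => by positivity)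
    have hkey : ζ - (A / (q n : ℝ) + 1 / (q (n + 1) : ℝ)) =
        ∑' i : ℕ, (1 : ℝ) / q (i + (n + 2)) := by
      rw [hζ, hAU, ← hsplit, Finset.sum_range_succ]
      ring
    rw [hkey, abs_of_nonneg htail_nonneg]
    exact htail_bound
  · -- strict inequality
    have h1 : (1 : ℝ) < q (n + 1) := by
      have := hlt n; have := hpos n
      exact_mod_cast Nat.lt_of_lt_of_le (by omega) (le_refl (q (n+1)))
    have hlogpos : 0 < Real.log (q (n + 1)) := Real.log_pos h1
    have h2 : ((k : ℝ) + 1) * Real.log (q (n + 1)) < Real.log (q (n + 2)) := by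
      rw [lt_div_iff₀ hlogpos] at hn
      exact hn
    have h3 : Real.log ((q (n + 1) : ℝ) ^ (k + 1)) < Real.log (q (n + 2)) := by
      rw [Real.log_pow]; push_cast; exact h2
    have h4 : (q (n + 1) : ℝ) ^ (k + 1) < q (n + 2) := by
      have := Real.log_lt_log_iff (by positivity : (0:ℝ) < (q (n + 1) : ℝ) ^ (k + 1)) (hposR (n + 2))
      exact this.mp h3
    have h5 : 2 * (q (n + 1) : ℝ) ^ (-(k + 1 : ℤ)) = 2 / (q (n + 1) : ℝ) ^ (k + 1) := by
      rw [show (-(k + 1 : ℤ)) = -((k + 1 : ℕ) : ℤ) by push_cast; ring, zpow_neg, zpow_natCast]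
      ring
    rw [h5]
    apply div_lt_div_of_pos_left (by norm_num) (by positivity) h4
end

section
/- Let k be a positive integer and let q_1, q_2, … be positive integers such that q_l divides q_{l+1} and q_l < q_{l+1} for all l ≥ 1, and set ζ = Σ_{l≥1} 1/q_l. Then for all sufficiently large n satisfying (log q_{n+1})/(log q_n) > k(k+1)+1 and (log q_{n+2})/(log q_{n+1}) > k+1, the (k+1)×(k+1) integer matrix (E_{j,m})_{1≤j,m≤k+1}, where E_{j,m} is the nearest integer to q_n^k · q_{n+1}^{j−1} · ζ^{m−1}, is nonsingular; in particular the k+1 integer vectors E_j = (E_{j,1}, …, E_{j,k+1}), 1 ≤ j ≤ k+1, are linearly independent. -/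
open scoped ENNReal

lemma round_eq_int_of_abs_lt {z : ℤ} {x : ℝ} (h : |x - z| < 1/2) : round x = z := by
  rw [round_eq, Int.floor_eq_iff]
  rw [abs_lt] at h
  constructor
  · linarith
  · push_cast; linarith

lemma qdvd_le (q : ℕ → ℕ) (hdvd : ∀ l, q l ∣ q (l+1)) {a b : ℕ} (hab : a ≤ b) : q a ∣ q b := by
  induction b, hab using Nat.le_induction with
  | base => rfl
  | succ b hb ih => exact ih.trans (hdvd b)

lemma qgrow (q : ℕ → ℕ) (hpos : ∀ l, 0 < q l) (hdvd : ∀ l, q l ∣ q (l+1))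
    (hlt : ∀ l, q l < q (l+1)) (t : ℕ) : ∀ l, q t * 2^l ≤ q (l + t) := by
  intro l
  induction l with
  | zero => simp
  | succ l ih =>
    have h2 : 2 * q (l + t) ≤ q (l + 1 + t) := by
      obtain ⟨c, hc⟩ := hdvd (l + t)
      have hc2 : 2 ≤ c := by
        rcases c with _ | _ | c
        · have := hpos (l + t + 1); omega
        · have := hlt (l + t); rw [hc] at this; omega
        · omega
      have : l + 1 + t = (l + t) + 1 := by omega
      rw [this, hc]
      calc 2 * q (l+t) ≤ q (l+t) * c := by nlinarith [hpos (l+t)]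
        _ = _ := rfl
    calc q t * 2^(l+1) = (q t * 2^l) * 2 := by ring
      _ ≤ q (l+t) * 2 := by nlinarith
      _ ≤ q (l+1+t) := by omega

lemma qlb (q : ℕ → ℕ) (hpos : ∀ l, 0 < q l) (hlt : ∀ l, q l < q (l+1)) : ∀ l, l + 1 ≤ q l := by
  intro l
  induction l with
  | zero => exact hpos 0
  | succ l ih => have := hlt l; omega

lemma qbound (q : ℕ → ℕ) (hpos : ∀ l, 0 < q l) (hgrow : ∀ t l, q t * 2^l ≤ q (l + t))
    (t l : ℕ) : (1:ℝ)/q (l + t) ≤ (1/q t) * (1/2)^l := by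
  have h0 : (0:ℝ) < q t := by exact_mod_cast hpos t
  have key : (1:ℝ)/ q (l + t) ≤ 1 / ((q t:ℝ) * 2^l) := by
    apply one_div_le_one_div_of_le (by positivity)
    exact_mod_cast hgrow t l
  calc (1:ℝ)/q (l + t) ≤ 1 / ((q t:ℝ) * 2^l) := key
    _ = (1/q t) * (1/2)^l := by rw [div_pow, one_pow, div_mul_div_comm, one_mul]

lemma qsummable (q : ℕ → ℕ) (hpos : ∀ l, 0 < q l) (hgrow : ∀ t l, q t * 2^l ≤ q (l + t)) :
    Summable (fun l => (1:ℝ)/q l) := by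
  have hgeom : Summable (fun l : ℕ => (1/(q 0:ℝ)) * (1/2)^l) :=
    (summable_geometric_of_lt_one (by norm_num) (by norm_num)).mul_left _
  refine Summable.of_nonneg_of_le (fun l => by positivity) (fun l => ?_) hgeom
  simpa using qbound q hpos hgrow 0 l

lemma qtail (q : ℕ → ℕ) (hpos : ∀ l, 0 < q l) (hgrow : ∀ t l, q t * 2^l ≤ q (l + t))
    (t : ℕ) : (∑' l, (1:ℝ)/q (l + t)) ≤ 2 / q t := by
  have hgeom : Summable (fun l => (1/(q t:ℝ)) * (1/2)^l) :=
    (summable_geometric_of_lt_one (by norm_num) (by norm_num)).mul_left _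
  have htail : Summable (fun l => (1:ℝ)/q (l + t)) :=
    (summable_nat_add_iff t).2 (qsummable q hpos hgrow)
  calc (∑' l, (1:ℝ)/q (l + t)) ≤ ∑' l, (1/(q t:ℝ)) * (1/2)^l :=
        Summable.tsum_le_tsum (qbound q hpos hgrow t) htail hgeom
    _ = (1/(q t:ℝ)) * ∑' l, (1/2:ℝ)^l := tsum_mul_left
    _ = 2 / q t := by
        rw [tsum_geometric_of_lt_one (by norm_num) (by norm_num)]
        norm_num
        ring

lemma choose_le_two_pow' (n i : ℕ) : n.choose i ≤ 2^n := by
  rcases le_or_gt i n with h | h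
  · calc n.choose i ≤ ∑ j ∈ Finset.range (n+1), n.choose j :=
        Finset.single_le_sum (fun j _ => Nat.zero_le _) (Finset.mem_range.2 (by omega))
      _ = 2^n := Nat.sum_range_choose n
  · rw [Nat.choose_eq_zero_of_lt h]; positivity

lemma core (k jn mn : ℕ) (hk : 1 ≤ k) (hjk : jn ≤ k) (hmk : mn ≤ k)
    (Qr Rr ζ σ : ℝ) (p : ℕ)
    (hQr2 : (2:ℝ) ≤ Qr) (hQbig : 16*(k:ℝ)*4^k + 1 ≤ Qr)
    (hRr1 : (1:ℝ) < Rr)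
    (hQkR : Qr^(k+1) ≤ Rr)
    (hσ0 : 0 ≤ σ) (hσR : σ ≤ 2 / Rr^(k+1))
    (hζeq : ζ = (p:ℝ)/Qr + 1/Rr + σ)
    (hζ2 : ζ ≤ 2) :
    |Qr^k * Rr^jn * ζ^mn -
      ∑ i ∈ Finset.range (k+1), (if i ≤ jn ∧ i ≤ mn then
        Rr^(jn-i) * ((mn.choose i : ℝ) * (p:ℝ)^(mn-i) * Qr^(k-(mn-i))) else 0)| < 1/2 := by
  have hQr0 : (0:ℝ) < Qr := by linarith
  have hRr0 : (0:ℝ) < Rr := by linarith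
  have hk0 : (1:ℝ) ≤ (k:ℝ) := by exact_mod_cast hk
  set y : ℝ := (p:ℝ)/Qr + 1/Rr with hydef
  have hy0 : 0 ≤ y := by positivity
  have hyζ : y ≤ ζ := by rw [hζeq]; linarith
  have hy2 : y ≤ 2 := hyζ.trans hζ2
  have hζ0 : 0 ≤ ζ := hy0.trans hyζ
  have hpQ2 : (p:ℝ)/Qr ≤ 2 := by
    have h1R : (0:ℝ) ≤ 1/Rr := by positivity
    rw [hydef] at hy2; linarith
  have hpQ0 : (0:ℝ) ≤ (p:ℝ)/Qr := by positivity
  -- the master bound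
  have hQk_R : Qr^k/Rr ≤ 1/Qr := by
    rw [div_le_div_iff₀ hRr0 hQr0, one_mul, ← pow_succ]
    exact hQkR
  have key : ∀ c : ℝ, 0 ≤ c → c ≤ 4*(k:ℝ)*4^k → c * (Qr^k/Rr) < 1/4 := by
    intro c hc0 hc
    have hD : (0:ℝ) < 4*(k:ℝ)*4^k := by positivity
    calc c * (Qr^k/Rr) ≤ c * (1/Qr) := by gcongr
      _ = c / Qr := by ring
      _ ≤ (4*(k:ℝ)*4^k) / Qr := by gcongr
      _ < (4*(k:ℝ)*4^k) / (4*(4*(k:ℝ)*4^k)) := by gcongr; linarith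
      _ = 1/4 := by field_simp
  -- error term
  have hG : ∀ t ∈ Finset.range mn, ζ^t * y^(mn-1-t) ≤ (2:ℝ)^k := by
    intro t ht
    have ht' : t < mn := Finset.mem_range.1 ht
    calc ζ^t * y^(mn-1-t) ≤ 2^t * 2^(mn-1-t) := by
          apply mul_le_mul (pow_le_pow_left₀ hζ0 hζ2 t) (pow_le_pow_left₀ hy0 hy2 _)
            (by positivity) (by positivity)
      _ = 2^(t + (mn-1-t)) := (pow_add 2 t _).symm
      _ ≤ (2:ℝ)^k := by
          apply pow_le_pow_right₀ (by norm_num)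
          omega
  have hG0 : (0:ℝ) ≤ ∑ t ∈ Finset.range mn, ζ^t * y^(mn-1-t) :=
    Finset.sum_nonneg fun t _ => by positivity
  have hGle : ∑ t ∈ Finset.range mn, ζ^t * y^(mn-1-t) ≤ (k:ℝ) * 2^k := by
    calc ∑ t ∈ Finset.range mn, ζ^t * y^(mn-1-t)
        ≤ (Finset.range mn).card • (2:ℝ)^k := Finset.sum_le_card_nsmul _ _ _ hG
      _ = (mn:ℝ) * 2^k := by simp [nsmul_eq_mul]
      _ ≤ (k:ℝ) * 2^k := by gcongr <;> exact_mod_cast hmk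
  have hgs : ζ^mn - y^mn = (∑ t ∈ Finset.range mn, ζ^t * y^(mn-1-t)) * σ := by
    have h := geom_sum₂_mul ζ y mn
    rw [← h]; congr 1; rw [hζeq, hydef]; ring
  have hεb : |Qr^k * Rr^jn * ζ^mn - Qr^k * Rr^jn * y^mn| < 1/4 := by
    rw [← mul_sub, hgs, abs_of_nonneg (by positivity)]
    calc Qr^k * Rr^jn * ((∑ t ∈ Finset.range mn, ζ^t * y^(mn-1-t)) * σ)
        ≤ Qr^k * Rr^k * (((k:ℝ) * 2^k) * (2/Rr^(k+1))) := by
          gcongr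
          exact hRr1.le
      _ = (2*(k:ℝ)*2^k) * (Qr^k/Rr) := by
          field_simp
          ring
      _ < 1/4 := by
          apply key _ (by positivity)
          have h24 : (2:ℝ)^k ≤ 4^k := by gcongr <;> norm_num
          nlinarith
  -- main expansion
  set c : ℕ → ℝ := fun i =>
    (mn.choose i : ℝ) * ((p:ℝ)/Qr)^(mn-i) * (1/Rr)^i * Qr^k * Rr^jn with hcdef
  have hmain : Qr^k * Rr^jn * y^mn = ∑ i ∈ Finset.range (mn+1), c i := by
    rw [hydef, add_comm ((p:ℝ)/Qr) (1/Rr), add_pow, Finset.mul_sum]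
    apply Finset.sum_congr rfl
    intro i _
    rw [hcdef]
    ring
  -- bad part
  have hcnonneg : ∀ i, 0 ≤ c i := fun i => by rw [hcdef]; positivity
  have hbad : ∀ i ∈ Finset.range (mn+1), (if i ≤ jn then 0 else c i) ≤ (4:ℝ)^k * (Qr^k/Rr) := by
    intro i hi
    have hi' : i ≤ mn := by have := Finset.mem_range.1 hi; omega
    by_cases hij : i ≤ jn
    · rw [if_pos hij]; positivity
    · rw [if_neg hij]
      have hji : jn + 1 ≤ i := by omega
      have hC : (mn.choose i : ℝ) ≤ 2^k := by
        calc (mn.choose i : ℝ) ≤ (2:ℝ)^mn := by exact_mod_cast choose_le_two_pow' mn i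
          _ ≤ 2^k := by apply pow_le_pow_right₀ (by norm_num) hmk
      have hP : ((p:ℝ)/Qr)^(mn-i) ≤ 2^k := by
        calc ((p:ℝ)/Qr)^(mn-i) ≤ 2^(mn-i) := by gcongr
          _ ≤ (2:ℝ)^k := by apply pow_le_pow_right₀ (by norm_num) (by omega)
      have hRj : (1/Rr)^i * Rr^jn ≤ 1/Rr := by
        rw [div_pow, one_pow, div_mul_eq_mul_div, div_le_div_iff₀ (by positivity) hRr0]
        calc 1 * Rr^jn * Rr = Rr^(jn+1) := by rw [one_mul, pow_succ]
          _ ≤ Rr^i := pow_le_pow_right₀ hRr1.le hji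
          _ = 1 * Rr^i := (one_mul _).symm
      calc c i = ((mn.choose i : ℝ) * ((p:ℝ)/Qr)^(mn-i)) * ((1/Rr)^i * Rr^jn) * Qr^k := by
            rw [hcdef]; ring
        _ ≤ ((2:ℝ)^k * 2^k) * (1/Rr) * Qr^k := by
            apply mul_le_mul_of_nonneg_right _ (by positivity)
            apply mul_le_mul (mul_le_mul hC hP (by positivity) (by positivity)) hRj
              (by positivity) (by positivity)
        _ = (4:ℝ)^k * (Qr^k/Rr) := by
            rw [← mul_pow]
            norm_num
            ring
  have hbadsum : |∑ i ∈ Finset.range (mn+1), (if i ≤ jn then 0 else c i)| < 1/4 := by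
    rw [abs_of_nonneg (Finset.sum_nonneg fun i _ => by split_ifs; exact le_rfl; exact hcnonneg i)]
    calc ∑ i ∈ Finset.range (mn+1), (if i ≤ jn then 0 else c i)
        ≤ (Finset.range (mn+1)).card • ((4:ℝ)^k * (Qr^k/Rr)) :=
          Finset.sum_le_card_nsmul _ _ _ hbad
      _ = ((mn+1:ℕ):ℝ) * ((4:ℝ)^k * (Qr^k/Rr)) := by simp [nsmul_eq_mul]
      _ = (((mn:ℝ)+1) * 4^k) * (Qr^k/Rr) := by push_cast; ring
      _ < 1/4 := by
          apply key _ (by positivity)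
          have hmnk : (mn:ℝ) ≤ (k:ℝ) := by exact_mod_cast hmk
          have h4 : (0:ℝ) < 4^k := by positivity
          nlinarith [h4]
  -- good part equals the integer sum
  have hgood : ∑ i ∈ Finset.range (k+1), (if i ≤ jn ∧ i ≤ mn then
        Rr^(jn-i) * ((mn.choose i : ℝ) * (p:ℝ)^(mn-i) * Qr^(k-(mn-i))) else 0)
      = ∑ i ∈ Finset.range (mn+1), (if i ≤ jn then c i else 0) := by
    rw [← Finset.sum_subset (Finset.range_subset_range.2 (by omega : mn+1 ≤ k+1))]
    · apply Finset.sum_congr rfl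
      intro i hi
      have him : i ≤ mn := by have := Finset.mem_range.1 hi; omega
      by_cases hij : i ≤ jn
      · rw [if_pos ⟨hij, him⟩, if_pos hij, hcdef]
        have e1 : Qr^k = Qr^(k-(mn-i)) * Qr^(mn-i) := by rw [← pow_add]; congr 1; omega
        have e2 : Rr^jn = Rr^(jn-i) * Rr^i := by rw [← pow_add]; congr 1; omega
        simp only [div_pow, one_pow]
        rw [e1, e2]
        field_simp
      · rw [if_neg (by tauto), if_neg hij]
    · intro i hi hnot
      have : ¬ (i ≤ mn) := by
        have := Finset.mem_range.1 hi
        intro h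
        exact hnot (Finset.mem_range.2 (by omega))
      rw [if_neg (by tauto)]
  -- assemble
  have hsplitsum : ∑ i ∈ Finset.range (mn+1), c i
      = ∑ i ∈ Finset.range (mn+1), (if i ≤ jn then c i else 0)
        + ∑ i ∈ Finset.range (mn+1), (if i ≤ jn then 0 else c i) := by
    rw [← Finset.sum_add_distrib]
    apply Finset.sum_congr rfl
    intro i _
    split_ifs <;> ring
  rw [hgood]
  have : Qr^k * Rr^jn * ζ^mn - ∑ i ∈ Finset.range (mn+1), (if i ≤ jn then c i else 0)
      = (Qr^k * Rr^jn * ζ^mn - Qr^k * Rr^jn * y^mn)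
        + ∑ i ∈ Finset.range (mn+1), (if i ≤ jn then 0 else c i) := by
    rw [hmain, hsplitsum]; ring
  rw [this]
  have habs := abs_add_le (Qr^k * Rr^jn * ζ^mn - Qr^k * Rr^jn * y^mn)
    (∑ i ∈ Finset.range (mn+1), (if i ≤ jn then 0 else c i))
  linarith


/-- For all sufficiently large `n` satisfying the two logarithmic conditions, the
`(k+1)×(k+1)` integer matrix `E` with `E j m` the nearest integer to
`q_n^k · q_{n+1}^j · ζ^m` (`0 ≤ j, m ≤ k`) is nonsingular; in particular its rows are
linearly independent (the sequence `q` is indexed from `0`, and `ζ = Σ_{l≥1} 1/q_l`). -/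
theorem stmt16 (k : ℕ) (hk : 0 < k) (q : ℕ → ℕ) (hpos : ∀ l, 0 < q l)
    (hdvd : ∀ l, q l ∣ q (l + 1)) (hlt : ∀ l, q l < q (l + 1))
    (ζ : ℝ) (hζ : ζ = ∑' l : ℕ, (1 : ℝ) / q l) :
    ∃ N : ℕ, ∀ n : ℕ, N ≤ n →
      ((k * (k + 1) + 1 : ℝ) < Real.log (q (n + 1)) / Real.log (q n)) →
      ((k + 1 : ℝ) < Real.log (q (n + 2)) / Real.log (q (n + 1))) →
      ∀ E : Matrix (Fin (k + 1)) (Fin (k + 1)) ℤ,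
        (∀ j m : Fin (k + 1),
          E j m = round ((q n : ℝ) ^ k * (q (n + 1) : ℝ) ^ (j : ℕ) * ζ ^ (m : ℕ))) →
        E.det ≠ 0 ∧ LinearIndependent ℤ (fun j : Fin (k + 1) => E j) := by
  have hgrow : ∀ t l, q t * 2^l ≤ q (l + t) := qgrow q hpos hdvd hlt
  have hsum : Summable (fun l => (1:ℝ)/q l) := qsummable q hpos hgrow
  have hζ2 : ζ ≤ 2 := by
    rw [hζ]
    have h := qtail q hpos hgrow 0
    have hq0 : (1:ℝ) ≤ q 0 := by exact_mod_cast hpos 0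
    calc (∑' l, (1:ℝ)/q l) = ∑' l, (1:ℝ)/q (l+0) := by simp
      _ ≤ 2 / q 0 := h
      _ ≤ 2 := by rw [div_le_iff₀ (by linarith)]; nlinarith
  refine ⟨16 * k * 4^k, fun n hn hlog1 hlog2 E hE => ?_⟩
  have hk1 : 1 ≤ k := hk
  have hQnat : 16 * k * 4^k + 1 ≤ q n := le_trans (by omega) (qlb q hpos hlt n)
  have h4k : (4:ℕ) ≤ 4^k := by
    calc (4:ℕ) = 4^1 := rfl
      _ ≤ 4^k := Nat.pow_le_pow_right (by norm_num) hk1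
  have hQnat2 : 2 ≤ q n := by nlinarith
  have hQr2 : (2:ℝ) ≤ q n := by exact_mod_cast hQnat2
  have hQbigR : 16*(k:ℝ)*4^k + 1 ≤ (q n:ℝ) := by exact_mod_cast hQnat
  have hQr0 : (0:ℝ) < q n := by linarith
  have hQr1 : (1:ℝ) < q n := by linarith
  have hQRlt : (q n:ℝ) < q (n+1) := by exact_mod_cast hlt n
  have hRr1 : (1:ℝ) < q (n+1) := by linarith
  have hRr0 : (0:ℝ) < q (n+1) := by linarith
  have hSr0 : (0:ℝ) < q (n+2) := by exact_mod_cast hpos (n+2)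
  have hlogQ : 0 < Real.log (q n) := Real.log_pos hQr1
  have hlogR : 0 < Real.log (q (n+1)) := Real.log_pos hRr1
  have hRbig : (q n : ℝ)^(k*(k+1)+1) < q (n+1) := by
    rw [← Real.log_lt_log_iff (by positivity) hRr0, Real.log_pow]
    rw [lt_div_iff₀ hlogQ] at hlog1
    push_cast
    nlinarith [hlog1, hlogQ]
  have hSbig : (q (n+1) : ℝ)^(k+1) < q (n+2) := by
    rw [← Real.log_lt_log_iff (by positivity) hSr0, Real.log_pow]
    rw [lt_div_iff₀ hlogR] at hlog2
    push_cast
    nlinarith [hlog2, hlogR]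
  have hQkR : (q n:ℝ)^(k+1) ≤ q (n+1) := by
    refine le_trans ?_ hRbig.le
    apply pow_le_pow_right₀ hQr1.le
    nlinarith
  -- tail and numerator
  set σ : ℝ := ∑' l, (1:ℝ)/q (l + (n+2)) with hσdef
  have hσ0 : 0 ≤ σ := tsum_nonneg (fun l => by positivity)
  have hσR : σ ≤ 2 / (q (n+1):ℝ)^(k+1) := by
    refine (qtail q hpos hgrow (n+2)).trans ?_
    apply div_le_div_of_nonneg_left (by norm_num) (by positivity) hSbig.le
  set p : ℕ := ∑ l ∈ Finset.range (n+1), q n / q l with hpdef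
  have hpcast : (p:ℝ) = (q n:ℝ) * ∑ l ∈ Finset.range (n+1), (1:ℝ)/q l := by
    rw [hpdef]
    push_cast [Finset.mul_sum]
    apply Finset.sum_congr rfl
    intro l hl
    have hdl : q l ∣ q n := qdvd_le q hdvd (Nat.lt_succ_iff.1 (Finset.mem_range.1 hl))
    rw [Nat.cast_div hdl (by exact_mod_cast (hpos l).ne')]
    rw [mul_one_div]
  have hsplit : ∑ l ∈ Finset.range (n+2), (1:ℝ)/q l + σ = ζ := by
    rw [hζ, hσdef]; exact Summable.sum_add_tsum_nat_add (n+2) hsum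
  have hpart : ∑ l ∈ Finset.range (n+2), (1:ℝ)/q l = (p:ℝ)/(q n) + 1/(q (n+1)) := by
    rw [Finset.sum_range_succ]
    congr 1
    rw [hpcast, mul_div_cancel_left₀ _ (ne_of_gt hQr0)]
  have hζeq : ζ = (p:ℝ)/(q n) + 1/(q (n+1)) + σ := by rw [← hsplit, hpart]
  -- the matrices
  set A : Matrix (Fin (k+1)) (Fin (k+1)) ℤ :=
    Matrix.of (fun j i : Fin (k+1) =>
      if (i:ℕ) ≤ (j:ℕ) then ((q (n+1) : ℤ))^((j:ℕ)-(i:ℕ)) else 0) with hA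
  set B : Matrix (Fin (k+1)) (Fin (k+1)) ℤ :=
    Matrix.of (fun i m : Fin (k+1) =>
      if (i:ℕ) ≤ (m:ℕ) then
        (((m:ℕ).choose (i:ℕ) : ℤ) * (p:ℤ)^((m:ℕ)-(i:ℕ)) * (q n:ℤ)^(k-((m:ℕ)-(i:ℕ))))
      else 0) with hB
  have hEAB : E = A * B := by
    ext j m
    rw [hE j m]
    apply round_eq_int_of_abs_lt
    set F : ℕ → ℝ := fun i' =>
        if i' ≤ (j:ℕ) ∧ i' ≤ (m:ℕ) then
          (q (n+1):ℝ)^((j:ℕ)-i') * (((m:ℕ).choose i' : ℝ) * (p:ℝ)^((m:ℕ)-i')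
            * (q n:ℝ)^(k-((m:ℕ)-i'))) else 0 with hF
    have hterm : ∀ i : Fin (k+1), ((A j i * B i m : ℤ):ℝ) = F (i:ℕ) := by
      intro i
      simp only [hA, hB, hF, Matrix.of_apply]
      by_cases h1 : (i:ℕ) ≤ (j:ℕ) <;> by_cases h2 : (i:ℕ) ≤ (m:ℕ) <;>
        simp [h1, h2] <;> push_cast <;> ring
    have hcast : (((A*B) j m : ℤ) : ℝ) = ∑ i ∈ Finset.range (k+1), F i := by
      rw [Matrix.mul_apply]
      calc ((∑ i : Fin (k+1), A j i * B i m : ℤ):ℝ)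
          = ∑ i : Fin (k+1), ((A j i * B i m : ℤ):ℝ) := Int.cast_sum _ _
        _ = ∑ i : Fin (k+1), F (i:ℕ) := Finset.sum_congr rfl (fun i _ => hterm i)
        _ = ∑ i ∈ Finset.range (k+1), F i := Fin.sum_univ_eq_sum_range _ (k+1)
    rw [hcast]
    exact core k (j:ℕ) (m:ℕ) hk1 j.is_le m.is_le (q n) (q (n+1)) ζ σ p
      hQr2 hQbigR hRr1 hQkR hσ0 hσR hζeq hζ2
  have hAdet : A.det = 1 := by
    rw [Matrix.det_of_lowerTriangular]
    · apply Finset.prod_eq_one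
      intro i _
      simp [hA]
    · intro a b hab
      have hba : a < b := hab
      have hval : (a:ℕ) < (b:ℕ) := Fin.lt_def.1 hba
      rw [hA]
      exact if_neg (not_le.2 hval)
  have hBdet : B.det = ((q n:ℤ)^k)^(k+1) := by
    rw [Matrix.det_of_upperTriangular]
    · rw [Finset.prod_congr rfl (g := fun _ => (q n:ℤ)^k)]
      · rw [Finset.prod_const]
        simp
      · intro i _
        simp [hB]
    · intro a b hab
      have hval : (b:ℕ) < (a:ℕ) := Fin.lt_def.1 hab
      rw [hB]
      exact if_neg (not_le.2 hval)
  have hdet : E.det ≠ 0 := by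
    rw [hEAB, Matrix.det_mul, hAdet, hBdet, one_mul]
    apply pow_ne_zero
    apply pow_ne_zero
    exact_mod_cast (hpos n).ne'
  refine ⟨hdet, ?_⟩
  rw [Fintype.linearIndependent_iff]
  intro g hg
  have hvm : Matrix.vecMul g E = 0 := by
    ext m
    have h1 := congrFun hg m
    simpa [Matrix.vecMul, dotProduct, Finset.sum_apply, smul_eq_mul] using h1
  have h0 := Matrix.eq_zero_of_vecMul_eq_zero hdet hvm
  intro i
  exact congrFun h0 i
end
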